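/- arXiv:2302.08671 — 10 statements merged into one kernel-verified Lean document; each statement's English description precedes it below -/
import Mathlib

section
/- Let V be a finite nonempty vertex type with decidable equality and let G₁ and G₂ be simple graphs on V with decidable adjacency, each of which has every vertex of positive degree and has no bipartite connected component. Let M₁ and M₂ denote the symmetrically normalized adjacency matrices of G₁ and G₂ respectively. Assume their fixed spaces differ, i.e. there exists x : V → ℝ such that exactly one of M₁ *ᵥ x = x and M₂ *ᵥ x = x holds. Then there exist matrices P₁, P₂ : Matrix V V ℝ such that M₁^k converges entrywise to P₁ and M₂^k converges entrywise to P₂ as k → ∞, and for every invertible matrix W : Matrix V V ℝ one has P₁ * W ≠ P₂ * W. -/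
open Matrix Filter

/-- The symmetrically normalized adjacency matrix `D^{-1/2} * A * D^{-1/2}` of a graph. -/
noncomputable def normAdj {V : Type} [Fintype V] [DecidableEq V]
    (G : SimpleGraph V) [DecidableRel G.Adj] : Matrix V V ℝ :=
  Matrix.diagonal (fun v => (G.degree v : ℝ) ^ (-(1/2 : ℝ))) * G.adjMatrix ℝ *
    Matrix.diagonal (fun v => (G.degree v : ℝ) ^ (-(1/2 : ℝ)))

/-- `G` has no bipartite connected component: for every connected component, the
subgraph induced on its vertex set is not 2-colorable. -/
def NoBipartiteComponent {V : Type} (G : SimpleGraph V) : Prop :=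
  ∀ c : G.ConnectedComponent, ¬ (G.induce c.supp).Colorable 2

/-!
For `g = D^{-1/2} y` one has `∑_{i ~ j} (g i + s g j)² = (1 + s²)‖y‖² + 2s⟨y, M y⟩`. Taking
`s = ±1` puts every eigenvalue of the symmetric matrix `M` in `[-1, 1]`, and an eigenvalue `-1`
would force `g i = -g j` along every edge, so the sign of `g` would 2-colour a component. Hence
`M^k = U diag(λ^k) U*` converges to the projection `P` onto the fixed space of `M`. As `M P = P`,
the fixed vectors of `M` are exactly those of `P`, so `P₁ = P₂` (which `P₁ W = P₂ W` forces for
invertible `W`) would make the two fixed spaces equal.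
-/

open Topology

theorem mul_eq_of_tendsto_pow {M : Type*} [Monoid M] [TopologicalSpace M] [ContinuousMul M]
    [T2Space M] {a p : M} (h : Tendsto (a ^ ·) atTop (𝓝 p)) : a * p = p := by
  have hsucc : Tendsto (fun k : ℕ => a * a ^ k) atTop (𝓝 p) := by
    simpa only [Function.comp_def, ← pow_succ'] using h.comp (tendsto_add_atTop_nat 1)
  exact tendsto_nhds_unique (((continuous_const.mul continuous_id).tendsto p).comp h) hsucc

namespace Matrix

variable {n : Type*} [Fintype n] [DecidableEq n]

theorem mulVec_eq_self_iff_of_tendsto_pow {R : Type*} [Semiring R] [TopologicalSpace R]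
    [IsTopologicalSemiring R] [T2Space R] {M P : Matrix n n R}
    (h : Tendsto (M ^ ·) atTop (𝓝 P)) {x : n → R} : M *ᵥ x = x ↔ P *ᵥ x = x := by
  constructor
  · intro hx
    have hpow : ∀ k : ℕ, (M ^ k) *ᵥ x = x := fun k => by
      induction k with
      | zero => exact one_mulVec x
      | succ k ih => rw [pow_succ', ← mulVec_mulVec, ih, hx]
    have hlim := ((continuous_id.matrix_mulVec (continuous_const (y := x))).tendsto P).comp h
    simp only [Function.comp_def, id, hpow] at hlim
    exact tendsto_nhds_unique hlim tendsto_const_nhds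
  · intro hx
    rw [← hx, mulVec_mulVec, mul_eq_of_tendsto_pow h]

theorem IsHermitian.tendsto_pow {𝕜 : Type*} [RCLike 𝕜] {A : Matrix n n 𝕜} (hA : A.IsHermitian)
    (h : ∀ i, hA.eigenvalues i ∈ Set.Ioc (-1) 1) :
    Tendsto (A ^ ·) atTop (𝓝 (Unitary.conjStarAlgAut 𝕜 _ hA.eigenvectorUnitary
      (diagonal fun i => if hA.eigenvalues i = 1 then 1 else 0))) := by
  have hpow : ∀ k : ℕ, A ^ k = Unitary.conjStarAlgAut 𝕜 _ hA.eigenvectorUnitary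
      (diagonal fun i => (hA.eigenvalues i : 𝕜) ^ k) := fun k => by
    conv_lhs => rw [hA.spectral_theorem]
    rw [← map_pow, diagonal_pow]
    rfl
  simp only [hpow, Unitary.conjStarAlgAut_apply]
  refine (((continuous_const.mul continuous_id).mul continuous_const).tendsto _).comp ?_
  have hdiag : Tendsto (fun k : ℕ => fun i => (hA.eigenvalues i : 𝕜) ^ k) atTop
      (𝓝 fun i => if hA.eigenvalues i = 1 then 1 else 0) := by
    refine tendsto_pi_nhds.2 fun i => ?_
    split_ifs with hi
    · simp [hi]
    · refine tendsto_pow_atTop_nhds_zero_of_norm_lt_one ?_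
      rw [RCLike.norm_ofReal, abs_lt]
      exact ⟨(h i).1, lt_of_le_of_ne (h i).2 hi⟩
  exact (continuous_id.matrix_diagonal.tendsto _).comp hdiag

end Matrix

namespace SimpleGraph

variable {V α : Type*} (G : SimpleGraph V)

theorem Walk.apply_ne_zero_of_adj_eq_neg [SubtractionMonoid α] {f : V → α}
    (hf : ∀ i j, G.Adj i j → f i = -f j) {u w : V} (p : G.Walk u w) (hu : f u ≠ 0) : f w ≠ 0 := by
  induction p with
  | nil => exact hu
  | cons h _ ih => exact ih (by simpa [hf _ _ h] using hu)

theorem colorable_induce_supp_of_adj_eq_neg [AddCommGroup α] [LinearOrder α]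
    [IsOrderedAddMonoid α] {f : V → α} (hf : ∀ i j, G.Adj i j → f i = -f j)
    {v : V} (hv : f v ≠ 0) : (G.induce (G.connectedComponentMk v).supp).Colorable 2 := by
  have hne : ∀ w : (G.connectedComponentMk v).supp, f w ≠ 0 := fun w =>
    (ConnectedComponent.exact w.2).symm.elim fun p => p.apply_ne_zero_of_adj_eq_neg G hf hv
  let c : (G.induce (G.connectedComponentMk v).supp).Coloring Bool :=
    Coloring.mk (fun w => decide (0 < f w)) fun {a b} hab => by
      rw [show f a = -f b from hf _ _ hab]
      rcases (hne b).lt_or_gt with hb | hb <;> simp [hb, hb.le]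
  simpa using c.colorable

end SimpleGraph

section NormAdj

variable {V : Type} [Fintype V] (G : SimpleGraph V) [DecidableRel G.Adj]

/-- The vector `D^{-1/2} y`, in which `⟨y, M y⟩` becomes a sum over the edges. -/
noncomputable def degScaled (y : V → ℝ) : V → ℝ :=
  fun v => (G.degree v : ℝ) ^ (-(1/2 : ℝ)) * y v

variable {G}

theorem degree_mul_degScaled_sq {v : V} (hv : 0 < G.degree v) (y : V → ℝ) :
    G.degree v * degScaled G y v ^ 2 = y v ^ 2 := by
  have hd : (0 : ℝ) < G.degree v := by exact_mod_cast hv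
  rw [degScaled, mul_pow, ← Real.rpow_natCast, ← Real.rpow_mul hd.le, ← mul_assoc]
  norm_num
  rw [Real.rpow_neg_one, mul_inv_cancel₀ hd.ne', one_mul]

theorem sum_adj_degScaled_sq (hdeg : ∀ v, 0 < G.degree v) (y : V → ℝ) :
    ∑ i, ∑ j, (if G.Adj i j then degScaled G y i ^ 2 else 0) = y ⬝ᵥ y := by
  refine Finset.sum_congr rfl fun i _ => ?_
  rw [Finset.sum_ite, Finset.sum_const_zero, add_zero, Finset.sum_const,
    ← SimpleGraph.neighborFinset_eq_filter, SimpleGraph.card_neighborFinset_eq_degree,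
    nsmul_eq_mul, degree_mul_degScaled_sq (hdeg i), sq]

variable [DecidableEq V] (G)

theorem normAdj_isHermitian : (normAdj G).IsHermitian := by
  have hD : (diagonal fun v => (G.degree v : ℝ) ^ (-(1/2 : ℝ)))ᴴ =
      diagonal fun v => (G.degree v : ℝ) ^ (-(1/2 : ℝ)) := by
    simp
  have hDAD := isHermitian_mul_mul_conjTranspose
    (diagonal fun v => (G.degree v : ℝ) ^ (-(1/2 : ℝ))) (G.isSymm_adjMatrix (α := ℝ))
  rwa [hD] at hDAD

theorem dotProduct_normAdj_mulVec (y : V → ℝ) :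
    y ⬝ᵥ (normAdj G *ᵥ y) =
      ∑ i, ∑ j, if G.Adj i j then degScaled G y i * degScaled G y j else 0 := by
  simp only [normAdj, dotProduct, mulVec, diagonal_mul, mul_diagonal,
    SimpleGraph.adjMatrix_apply, Finset.mul_sum, degScaled]
  refine Finset.sum_congr rfl fun i _ => Finset.sum_congr rfl fun j _ => ?_
  split_ifs <;> ring

variable {G}

theorem sum_adj_degScaled_add_sq (hdeg : ∀ v, 0 < G.degree v) (y : V → ℝ) (s : ℝ) :
    ∑ i, ∑ j, (if G.Adj i j then (degScaled G y i + s * degScaled G y j) ^ 2 else 0) =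
      (1 + s ^ 2) * (y ⬝ᵥ y) + 2 * s * (y ⬝ᵥ (normAdj G *ᵥ y)) := by
  have hsq := sum_adj_degScaled_sq hdeg y
  have hswap : ∑ i, ∑ j, (if G.Adj i j then degScaled G y j ^ 2 else 0) = y ⬝ᵥ y := by
    rw [Finset.sum_comm, ← hsq]
    simp only [G.adj_comm]
  rw [dotProduct_normAdj_mulVec]
  set g := degScaled G y
  have hexpand : ∀ i j, (if G.Adj i j then (g i + s * g j) ^ 2 else 0) =
      (if G.Adj i j then g i ^ 2 else 0) + s ^ 2 * (if G.Adj i j then g j ^ 2 else 0) +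
        2 * s * (if G.Adj i j then g i * g j else 0) := by
    intro i j; split_ifs <;> ring
  simp only [hexpand, Finset.sum_add_distrib, ← Finset.mul_sum, hsq, hswap]
  ring

theorem normAdj_eigenvalue_mem_Icc (hdeg : ∀ v, 0 < G.degree v) {μ : ℝ} {y : V → ℝ}
    (hy : y ≠ 0) (h : normAdj G *ᵥ y = μ • y) : μ ∈ Set.Icc (-1) 1 := by
  have hN : 0 < y ⬝ᵥ y := lt_of_le_of_ne (Finset.sum_nonneg fun i _ => mul_self_nonneg (y i))
    (Ne.symm (dotProduct_self_eq_zero.not.2 hy))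
  have key : ∀ s : ℝ, 0 ≤ (1 + s ^ 2) * (y ⬝ᵥ y) + 2 * s * (μ * (y ⬝ᵥ y)) := fun s => by
    rw [← smul_eq_mul μ, ← dotProduct_smul, ← h, ← sum_adj_degScaled_add_sq hdeg]
    exact Finset.sum_nonneg fun i _ => Finset.sum_nonneg fun j _ => by split_ifs <;> positivity
  constructor <;> nlinarith [key 1, key (-1)]

theorem normAdj_eigenvalue_ne_neg_one (hdeg : ∀ v, 0 < G.degree v)
    (hbip : NoBipartiteComponent G) {μ : ℝ} {y : V → ℝ}
    (hy : y ≠ 0) (h : normAdj G *ᵥ y = μ • y) : μ ≠ -1 := by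
  rintro rfl
  set g := degScaled G y
  have hterm : ∀ i j, 0 ≤ if G.Adj i j then (g i + 1 * g j) ^ 2 else 0 := fun i j => by
    split_ifs <;> positivity
  have hzero : ∑ i, ∑ j, (if G.Adj i j then (g i + 1 * g j) ^ 2 else 0) = 0 := by
    rw [sum_adj_degScaled_add_sq hdeg, h, dotProduct_smul, smul_eq_mul]
    ring
  have hanti : ∀ i j, G.Adj i j → g i = -g j := fun i j hij => by
    have hrow := (Finset.sum_eq_zero_iff_of_nonneg fun i _ =>
      Finset.sum_nonneg fun j _ => hterm i j).1 hzero i (Finset.mem_univ i)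
    have hentry := (Finset.sum_eq_zero_iff_of_nonneg fun j _ => hterm i j).1 hrow j
      (Finset.mem_univ j)
    rw [if_pos hij, one_mul, sq_eq_zero_iff] at hentry
    linarith
  obtain ⟨v, hv⟩ := Function.ne_iff.mp hy
  have hgv : g v ≠ 0 := mul_ne_zero (Real.rpow_pos_of_pos (by exact_mod_cast hdeg v) _).ne' hv
  exact hbip _ (G.colorable_induce_supp_of_adj_eq_neg hanti hgv)

theorem normAdj_eigenvalue_mem_Ioc (hdeg : ∀ v, 0 < G.degree v)
    (hbip : NoBipartiteComponent G) {μ : ℝ} {y : V → ℝ}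
    (hy : y ≠ 0) (h : normAdj G *ᵥ y = μ • y) : μ ∈ Set.Ioc (-1) 1 :=
  have hμ := normAdj_eigenvalue_mem_Icc hdeg hy h
  ⟨lt_of_le_of_ne hμ.1 (normAdj_eigenvalue_ne_neg_one hdeg hbip hy h).symm, hμ.2⟩

end NormAdj

theorem normAdj_exists_tendsto_pow {V : Type} [Fintype V] [DecidableEq V] (G : SimpleGraph V)
    [DecidableRel G.Adj] (hdeg : ∀ v, 0 < G.degree v) (hbip : NoBipartiteComponent G) :
    ∃ P, Tendsto (normAdj G ^ ·) atTop (𝓝 P) := by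
  have hA := normAdj_isHermitian G
  refine ⟨_, hA.tendsto_pow fun i => ?_⟩
  have hy : (hA.eigenvectorBasis i : V → ℝ) ≠ 0 :=
    (WithLp.ofLp_eq_zero 2).ne.2 (hA.eigenvectorBasis.orthonormal.ne_zero i)
  exact normAdj_eigenvalue_mem_Ioc hdeg hbip hy (hA.mulVec_eigenvectorBasis i)

theorem stmt0_general {V : Type} [Fintype V] [DecidableEq V]
    (G₁ G₂ : SimpleGraph V) [DecidableRel G₁.Adj] [DecidableRel G₂.Adj]
    (hdeg₁ : ∀ v, 0 < G₁.degree v) (hdeg₂ : ∀ v, 0 < G₂.degree v)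
    (hbip₁ : NoBipartiteComponent G₁) (hbip₂ : NoBipartiteComponent G₂)
    (hx : ∃ x : V → ℝ, Xor' (normAdj G₁ *ᵥ x = x) (normAdj G₂ *ᵥ x = x)) :
    ∃ P₁ P₂ : Matrix V V ℝ,
      (∀ i j, Tendsto (fun k => (normAdj G₁ ^ k) i j) atTop (nhds (P₁ i j))) ∧
      (∀ i j, Tendsto (fun k => (normAdj G₂ ^ k) i j) atTop (nhds (P₂ i j))) ∧
      ∀ W : Matrix V V ℝ, IsUnit W → P₁ * W ≠ P₂ * W := by
  obtain ⟨P₁, h₁⟩ := normAdj_exists_tendsto_pow G₁ hdeg₁ hbip₁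
  obtain ⟨P₂, h₂⟩ := normAdj_exists_tendsto_pow G₂ hdeg₂ hbip₂
  refine ⟨P₁, P₂, fun i j => tendsto_pi_nhds.1 (tendsto_pi_nhds.1 h₁ i) j,
    fun i j => tendsto_pi_nhds.1 (tendsto_pi_nhds.1 h₂ i) j, fun W hW hP => ?_⟩
  obtain ⟨x, hx⟩ := hx
  rw [mulVec_eq_self_iff_of_tendsto_pow h₁, mulVec_eq_self_iff_of_tendsto_pow h₂,
    hW.mul_left_injective hP] at hx
  exact hx.elim (fun h => h.2 h.1) (fun h => h.2 h.1)

theorem stmt0 {V : Type} [Fintype V] [DecidableEq V] [Nonempty V]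
    (G₁ G₂ : SimpleGraph V) [DecidableRel G₁.Adj] [DecidableRel G₂.Adj]
    (hdeg₁ : ∀ v, 0 < G₁.degree v) (hdeg₂ : ∀ v, 0 < G₂.degree v)
    (hbip₁ : NoBipartiteComponent G₁) (hbip₂ : NoBipartiteComponent G₂)
    (hx : ∃ x : V → ℝ, Xor' (normAdj G₁ *ᵥ x = x) (normAdj G₂ *ᵥ x = x)) :
    ∃ P₁ P₂ : Matrix V V ℝ,
      (∀ i j, Tendsto (fun k => (normAdj G₁ ^ k) i j) atTop (nhds (P₁ i j))) ∧
      (∀ i j, Tendsto (fun k => (normAdj G₂ ^ k) i j) atTop (nhds (P₂ i j))) ∧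
      ∀ W : Matrix V V ℝ, IsUnit W → P₁ * W ≠ P₂ * W :=
  stmt0_general G₁ G₂ hdeg₁ hdeg₂ hbip₁ hbip₂ hx
end

section
/- Let V be a finite vertex type with decidable equality and let G be a simple graph on V with decidable adjacency in which every vertex has positive degree, and let M be its symmetrically normalized adjacency matrix. Then the matrix 1 + M is positive semidefinite. -/
open Matrix Filter

/-! `1 + M = D^{-1/2} (D + A) D^{-1/2}`, and the signless Laplacian `D + A` factors as `N Nᵀ`
through the unsigned vertex–edge incidence matrix `N`, so it is positive semidefinite. -/

theorem Real.rpow_neg_half_mul_self_mul_rpow_neg_half {d : ℝ} (hd : 0 < d) :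
    d ^ (-(1/2 : ℝ)) * d * d ^ (-(1/2 : ℝ)) = 1 := by
  rw [mul_right_comm, ← Real.rpow_add hd, ← Real.rpow_add_one hd.ne']
  norm_num

namespace SimpleGraph

variable {V : Type*} [Fintype V] [DecidableEq V] (G : SimpleGraph V) [DecidableRel G.Adj]

theorem degMatrix_add_adjMatrix_eq_incMatrix_mul_transpose (R : Type*) [Semiring R] :
    G.degMatrix R + G.adjMatrix R = G.incMatrix R * (G.incMatrix R)ᵀ := by
  rw [incMatrix_mul_transpose]
  ext a b
  rw [Matrix.add_apply, degMatrix, diagonal_apply, adjMatrix_apply, of_apply]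
  split_ifs <;> simp_all

theorem posSemidef_degMatrix_add_adjMatrix (R : Type*) [CommRing R] [PartialOrder R] [StarRing R]
    [StarOrderedRing R] [TrivialStar R] :
    (G.degMatrix R + G.adjMatrix R).PosSemidef := by
  rw [degMatrix_add_adjMatrix_eq_incMatrix_mul_transpose, ← conjTranspose_eq_transpose_of_trivial]
  exact posSemidef_self_mul_conjTranspose _

end SimpleGraph

theorem one_add_normAdj_eq {V : Type} [Fintype V] [DecidableEq V]
    (G : SimpleGraph V) [DecidableRel G.Adj] (hdeg : ∀ v, 0 < G.degree v) :
    1 + normAdj G = diagonal (fun v => (G.degree v : ℝ) ^ (-(1/2 : ℝ))) *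
      (G.degMatrix ℝ + G.adjMatrix ℝ) * diagonal (fun v => (G.degree v : ℝ) ^ (-(1/2 : ℝ))) := by
  rw [mul_add, add_mul, normAdj, SimpleGraph.degMatrix, diagonal_mul_diagonal,
    diagonal_mul_diagonal]
  congr 1
  rw [← diagonal_one]
  congr 1
  funext v
  exact (Real.rpow_neg_half_mul_self_mul_rpow_neg_half (by exact_mod_cast hdeg v)).symm

theorem stmt3 {V : Type} [Fintype V] [DecidableEq V]
    (G : SimpleGraph V) [DecidableRel G.Adj] (hdeg : ∀ v, 0 < G.degree v) :
    (1 + normAdj G).PosSemidef := by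
  rw [one_add_normAdj_eq G hdeg]
  simpa using (G.posSemidef_degMatrix_add_adjMatrix ℝ).mul_mul_conjTranspose_same
    (diagonal fun v => (G.degree v : ℝ) ^ (-(1/2 : ℝ)))
end

section
/- Let V be a finite vertex type with decidable equality and let G be a simple graph on V with decidable adjacency in which every vertex has positive degree, and let M be its symmetrically normalized adjacency matrix. Then every real eigenvalue μ of M (i.e. every μ : ℝ such that M *ᵥ x = μ • x for some x ≠ 0) satisfies -1 ≤ μ ≤ 1. -/
/-!
Substituting `y = D^{-1/2} x` turns `M x = μ x` into the generalized eigenvalue equation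
`A y = μ D y`, i.e. `∑_{w ~ v} y w = μ · deg v · y v` for every vertex `v`. At a vertex `v`
where `|y|` is maximal, the left side has absolute value at most `deg v · |y v|`, whence `|μ| ≤ 1`.
-/

open Matrix Filter

namespace SimpleGraph

variable {V : Type} [Fintype V] [DecidableEq V] (G : SimpleGraph V) [DecidableRel G.Adj]

theorem abs_le_one_of_adjMatrix_mulVec_eq_smul_degMatrix_mulVec {R : Type*} [Field R]
    [LinearOrder R] [IsStrictOrderedRing R] (hdeg : ∀ v, 0 < G.degree v) {μ : R} {y : V → R}
    (hy : y ≠ 0) (h : G.adjMatrix R *ᵥ y = μ • (G.degMatrix R *ᵥ y)) : |μ| ≤ 1 := by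
  obtain ⟨v₀, hv₀⟩ := Function.ne_iff.mp hy
  obtain ⟨v, -, hmax⟩ := Finset.exists_max_image Finset.univ (fun w => |y w|)
    ⟨v₀, Finset.mem_univ _⟩
  have hyv : 0 < |y v| := (abs_pos.mpr hv₀).trans_le (hmax v₀ (Finset.mem_univ _))
  have hdv : (0 : R) < G.degree v := by exact_mod_cast hdeg v
  have hsum : ∑ w ∈ G.neighborFinset v, y w = μ * (G.degree v * y v) := by
    simpa [adjMatrix_mulVec_apply, degMatrix_mulVec_apply] using congrFun h v
  have hbound : |μ| * (G.degree v * |y v|) ≤ 1 * (G.degree v * |y v|) :=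
    calc |μ| * (G.degree v * |y v|) = |∑ w ∈ G.neighborFinset v, y w| := by
          rw [hsum, abs_mul, abs_mul, abs_of_pos hdv]
      _ ≤ ∑ w ∈ G.neighborFinset v, |y w| := Finset.abs_sum_le_sum_abs _ _
      _ ≤ ∑ w ∈ G.neighborFinset v, |y v| :=
          Finset.sum_le_sum fun w _ => hmax w (Finset.mem_univ w)
      _ = 1 * (G.degree v * |y v|) := by simp
  exact le_of_mul_le_mul_right hbound (mul_pos hdv hyv)

noncomputable abbrev invSqrtDegMatrix : Matrix V V ℝ :=
  diagonal fun v => (G.degree v : ℝ) ^ (-(1 / 2 : ℝ))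

theorem normAdj_eq : normAdj G = G.invSqrtDegMatrix * G.adjMatrix ℝ * G.invSqrtDegMatrix := rfl

theorem degMatrix_mul_invSqrtDegMatrix_mul_invSqrtDegMatrix (hdeg : ∀ v, 0 < G.degree v) :
    G.degMatrix ℝ * G.invSqrtDegMatrix * G.invSqrtDegMatrix = 1 := by
  rw [degMatrix, diagonal_mul_diagonal, diagonal_mul_diagonal, ← diagonal_one]
  congr 1
  ext v
  have hdv : (0 : ℝ) < G.degree v := by exact_mod_cast hdeg v
  rw [mul_assoc, ← Real.rpow_add hdv]
  norm_num [Real.rpow_neg_one, hdv.ne']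

theorem adjMatrix_mulVec_eq_smul_degMatrix_mulVec_of_normAdj (hdeg : ∀ v, 0 < G.degree v)
    {μ : ℝ} {x : V → ℝ} (h : normAdj G *ᵥ x = μ • x) :
    G.adjMatrix ℝ *ᵥ (G.invSqrtDegMatrix *ᵥ x) =
      μ • (G.degMatrix ℝ *ᵥ (G.invSqrtDegMatrix *ᵥ x)) := by
  calc G.adjMatrix ℝ *ᵥ (G.invSqrtDegMatrix *ᵥ x)
      = (G.degMatrix ℝ * G.invSqrtDegMatrix * G.invSqrtDegMatrix) *ᵥ
          (G.adjMatrix ℝ *ᵥ (G.invSqrtDegMatrix *ᵥ x)) := by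
        rw [degMatrix_mul_invSqrtDegMatrix_mul_invSqrtDegMatrix G hdeg, one_mulVec]
    _ = (G.degMatrix ℝ * G.invSqrtDegMatrix) *ᵥ (normAdj G *ᵥ x) := by
        simp only [normAdj_eq, mulVec_mulVec, Matrix.mul_assoc]
    _ = μ • (G.degMatrix ℝ *ᵥ (G.invSqrtDegMatrix *ᵥ x)) := by
        rw [h, mulVec_smul, mulVec_mulVec]

theorem invSqrtDegMatrix_mulVec_ne_zero (hdeg : ∀ v, 0 < G.degree v) {x : V → ℝ} (hx : x ≠ 0) :
    G.invSqrtDegMatrix *ᵥ x ≠ 0 := by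
  obtain ⟨v, hv⟩ := Function.ne_iff.mp hx
  refine Function.ne_iff.mpr ⟨v, ?_⟩
  rw [mulVec_diagonal, Pi.zero_apply]
  exact mul_ne_zero (Real.rpow_pos_of_pos (by exact_mod_cast hdeg v) _).ne' hv

end SimpleGraph

theorem stmt4 {V : Type} [Fintype V] [DecidableEq V]
    (G : SimpleGraph V) [DecidableRel G.Adj] (hdeg : ∀ v, 0 < G.degree v) :
    ∀ (μ : ℝ) (x : V → ℝ), x ≠ 0 → normAdj G *ᵥ x = μ • x → -1 ≤ μ ∧ μ ≤ 1 := by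
  intro μ x hx h
  exact abs_le.mp <| G.abs_le_one_of_adjMatrix_mulVec_eq_smul_degMatrix_mulVec hdeg
    (G.invSqrtDegMatrix_mulVec_ne_zero hdeg hx)
    (G.adjMatrix_mulVec_eq_smul_degMatrix_mulVec_of_normAdj hdeg h)
end

section
/- Let V be a finite vertex type with decidable equality and let G be a simple graph on V with decidable adjacency in which every vertex has positive degree, and let M be its symmetrically normalized adjacency matrix. Then -1 is an eigenvalue of M (i.e. there exists x ≠ 0 with M *ᵥ x = (-1) • x) if and only if some connected component of G is bipartite. -/
open Matrix Filter

/-!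
Substituting `x = D^{1/2} y`, the equation `M x = -x` becomes `(D + A) y = 0`, i.e. `y` lies in the
kernel of the signless Laplacian. Its quadratic form is `∑_{u ~ v} (y u + y v)²`, so the kernel
consists of the functions that change sign along every edge. On a component where such a `y` does
not vanish, the sign of `y` is a proper 2-coloring; conversely a 2-coloring of one component gives
the `±1`-valued function on it, extended by `0`.
-/

open Finset

namespace SimpleGraph

variable {V : Type} {G : SimpleGraph V}

section SignAlternating

variable {R : Type*}

theorem Reachable.ne_zero_of_forall_adj_eq_neg [AddGroup R] {y : V → R}
    (hy : ∀ u v, G.Adj u v → y u = -y v) {a b : V} (hab : G.Reachable a b) (ha : y a ≠ 0) :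
    y b ≠ 0 := by
  obtain ⟨p⟩ := hab
  induction p with
  | nil => exact ha
  | cons h _ ih => exact ih (by rwa [hy _ _ h.symm, neg_ne_zero])

theorem colorable_two_induce_supp_of_forall_adj_eq_neg
    [AddCommGroup R] [LinearOrder R] [IsOrderedAddMonoid R] {y : V → R}
    (hy : ∀ u v, G.Adj u v → y u = -y v) {v : V} (hv : y v ≠ 0) :
    (G.induce (G.connectedComponentMk v).supp).Colorable 2 := by
  refine (Coloring.mk (fun w => decide (0 < y w.1)) fun {a b} hab => ?_).colorable
  have hya : y a ≠ 0 :=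
    (ConnectedComponent.eq.mp a.2).symm.ne_zero_of_forall_adj_eq_neg hy hv
  have hyb : y b = -y a := hy b a (G.adj_symm hab)
  rcases hya.lt_or_gt with h | h <;> simp [hyb, h, h.not_gt]

theorem exists_ne_zero_forall_adj_eq_neg_of_colorable [Ring R] [Nontrivial R]
    {c : G.ConnectedComponent} (hc : (G.induce c.supp).Colorable 2) :
    ∃ y : V → R, y ≠ 0 ∧ ∀ u v, G.Adj u v → y u = -y v := by
  classical
  obtain ⟨C⟩ := hc
  refine ⟨fun v => if h : v ∈ c.supp then (if C ⟨v, h⟩ = 0 then 1 else -1) else 0, ?_, ?_⟩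
  · obtain ⟨v, hv⟩ := c.exists_rep
    replace hv : v ∈ c.supp := (c.mem_supp_iff v).mpr hv
    refine Function.ne_iff.mpr ⟨v, ?_⟩
    simp only [dif_pos hv, Pi.zero_apply]
    split_ifs <;> simp
  · intro u v huv
    have hsupp : u ∈ c.supp ↔ v ∈ c.supp := by
      simp only [ConnectedComponent.mem_supp_iff,
        ConnectedComponent.connectedComponentMk_eq_of_adj huv]
    by_cases hu : u ∈ c.supp
    · have hv := hsupp.mp hu
      have hC : C ⟨u, hu⟩ ≠ C ⟨v, hv⟩ := C.valid huv
      simp only [dif_pos hu, dif_pos hv]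
      split_ifs with hu0 hv0 hv0
      · exact absurd (hu0.trans hv0.symm) hC
      · simp
      · simp
      · exact absurd ((Fin.eq_one_of_ne_zero _ hu0).trans (Fin.eq_one_of_ne_zero _ hv0).symm) hC
    · simp [hu, hsupp.not.mp hu]

end SignAlternating

variable [Fintype V] [DecidableRel G.Adj]

theorem sum_sum_neighborFinset_comm {M : Type*} [AddCommMonoid M] (f : V → V → M) :
    ∑ v, ∑ u ∈ G.neighborFinset v, f v u = ∑ v, ∑ u ∈ G.neighborFinset v, f u v :=
  sum_comm' (by simp [G.adj_comm])

theorem forall_sum_neighborFinset_eq_neg_iff {R : Type*} [CommRing R] [LinearOrder R]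
    [IsStrictOrderedRing R] (y : V → R) :
    (∀ v, ∑ u ∈ G.neighborFinset v, y u = -(G.degree v * y v)) ↔
      ∀ u v, G.Adj u v → y u = -y v := by
  constructor
  · intro hy
    have hterm : ∀ v, ∑ u ∈ G.neighborFinset v, (y v + y u) * y v = 0 := fun v => by
      rw [← sum_mul, sum_add_distrib, hy v, sum_const, card_neighborFinset_eq_degree,
        nsmul_eq_mul]
      ring
    have hsq : ∑ v, ∑ u ∈ G.neighborFinset v, (y v + y u) ^ 2 = 0 := by
      calc ∑ v, ∑ u ∈ G.neighborFinset v, (y v + y u) ^ 2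
          = ∑ v, ∑ u ∈ G.neighborFinset v, (y v + y u) * y v
            + ∑ v, ∑ u ∈ G.neighborFinset v, (y u + y v) * y u := by
            rw [← sum_add_distrib]
            refine sum_congr rfl fun v _ => ?_
            rw [← sum_add_distrib]
            exact sum_congr rfl fun u _ => by ring
        _ = 0 := by
            rw [← sum_sum_neighborFinset_comm (fun v u => (y v + y u) * y v)]
            simp [hterm]
    intro u v huv
    have h := (sum_eq_zero_iff_of_nonneg fun _ _ => sum_nonneg fun _ _ => sq_nonneg _).mp
      hsq v (mem_univ v)
    have h' := (sum_eq_zero_iff_of_nonneg fun _ _ => sq_nonneg _).mp h u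
      ((G.mem_neighborFinset v u).mpr huv.symm)
    linear_combination pow_eq_zero_iff two_ne_zero |>.mp h'
  · intro hy v
    rw [sum_congr rfl fun u hu => hy u v ((G.mem_neighborFinset v u).mp hu).symm, sum_const,
      card_neighborFinset_eq_degree, nsmul_eq_mul, mul_neg]

theorem sqrt_degree_ne_zero (hdeg : ∀ v, 0 < G.degree v) (v : V) : √(G.degree v : ℝ) ≠ 0 :=
  Real.sqrt_ne_zero'.mpr (by exact_mod_cast hdeg v)

end SimpleGraph

open SimpleGraph

section NormAdj

variable {V : Type} [Fintype V] [DecidableEq V] (G : SimpleGraph V) [DecidableRel G.Adj]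

theorem normAdj_mulVec_apply (x : V → ℝ) (v : V) :
    (normAdj G *ᵥ x) v =
      (√(G.degree v : ℝ))⁻¹ * ∑ u ∈ G.neighborFinset v, x u / √(G.degree u : ℝ) := by
  have hpow : ∀ w, (G.degree w : ℝ) ^ (-(1/2 : ℝ)) = (√(G.degree w : ℝ))⁻¹ := fun w => by
    rw [Real.rpow_neg (Nat.cast_nonneg _), ← Real.sqrt_eq_rpow]
  simp only [normAdj, hpow]
  simp only [← mulVec_mulVec, mulVec_diagonal, adjMatrix_mulVec_apply, div_eq_inv_mul]

variable {G}

theorem normAdj_mulVec_eq_neg_iff (hdeg : ∀ v, 0 < G.degree v) (x : V → ℝ) :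
    normAdj G *ᵥ x = (-1 : ℝ) • x ↔
      ∀ v, ∑ u ∈ G.neighborFinset v, x u / √(G.degree u : ℝ) =
        -(G.degree v * (x v / √(G.degree v : ℝ))) := by
  refine funext_iff.trans (forall_congr' fun v => ?_)
  have hv := sqrt_degree_ne_zero hdeg v
  have hdv : (G.degree v : ℝ) * (x v / √(G.degree v : ℝ)) = √(G.degree v : ℝ) * x v := by
    rw [mul_div_assoc', div_eq_iff hv, mul_right_comm, Real.mul_self_sqrt (Nat.cast_nonneg _)]
  rw [normAdj_mulVec_apply, inv_mul_eq_iff_eq_mul₀ hv, hdv, neg_one_smul, Pi.neg_apply, mul_neg]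

theorem exists_normAdj_mulVec_eq_neg_iff (hdeg : ∀ v, 0 < G.degree v) :
    (∃ x : V → ℝ, x ≠ 0 ∧ normAdj G *ᵥ x = (-1 : ℝ) • x) ↔
      ∃ y : V → ℝ, y ≠ 0 ∧ ∀ u v, G.Adj u v → y u = -y v := by
  have hsqrt := sqrt_degree_ne_zero hdeg
  simp_rw [normAdj_mulVec_eq_neg_iff hdeg, ← forall_sum_neighborFinset_eq_neg_iff]
  constructor
  · rintro ⟨x, hx0, hx⟩
    obtain ⟨v, hv⟩ := Function.ne_iff.mp hx0
    exact ⟨fun u => x u / √(G.degree u : ℝ),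
      Function.ne_iff.mpr ⟨v, div_ne_zero hv (hsqrt v)⟩, hx⟩
  · rintro ⟨y, hy0, hy⟩
    obtain ⟨v, hv⟩ := Function.ne_iff.mp hy0
    refine ⟨fun u => √(G.degree u : ℝ) * y u,
      Function.ne_iff.mpr ⟨v, mul_ne_zero (hsqrt v) hv⟩, ?_⟩
    simpa only [mul_div_cancel_left₀ _ (hsqrt _)] using hy

end NormAdj

theorem stmt5 {V : Type} [Fintype V] [DecidableEq V]
    (G : SimpleGraph V) [DecidableRel G.Adj] (hdeg : ∀ v, 0 < G.degree v) :
    (∃ x : V → ℝ, x ≠ 0 ∧ normAdj G *ᵥ x = (-1 : ℝ) • x) ↔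
      ∃ c : G.ConnectedComponent, (G.induce c.supp).Colorable 2 := by
  rw [exists_normAdj_mulVec_eq_neg_iff hdeg]
  constructor
  · rintro ⟨y, hy0, hy⟩
    obtain ⟨v, hv⟩ := Function.ne_iff.mp hy0
    exact ⟨_, colorable_two_induce_supp_of_forall_adj_eq_neg hy hv⟩
  · rintro ⟨c, hc⟩
    exact exists_ne_zero_forall_adj_eq_neg_of_colorable hc
end

section
/- Let V be a finite vertex type with decidable equality and let G be a simple graph on V with decidable adjacency in which every vertex has positive degree, and let M be its symmetrically normalized adjacency matrix. Then the ℝ-dimension (finrank) of the subspace {x : V → ℝ | M *ᵥ x = x} of eigenvectors of M for eigenvalue 1 equals the number of connected components of G. -/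
open Matrix Filter

/-!
Writing `S = D^{-1/2}`, positivity of the degrees gives `S * D * S = 1`, so
`M = 1 - S * L * S` with `L = D - A` the Laplacian. The `1`-eigenspace of `M` is therefore the
kernel of `S * L * S`; as `S` is invertible, this kernel has the dimension of `ker L`, which is the
number of connected components.
-/

namespace Matrix

variable {K n : Type*} [Field K] [Fintype n]

lemma finrank_ker_mulVecLin_eq_card_sub_rank (A : Matrix n n K) :
    Module.finrank K (LinearMap.ker A.mulVecLin) = Fintype.card n - A.rank := by
  have := A.mulVecLin.finrank_range_add_finrank_ker
  rw [Module.finrank_fintype_fun_eq_card] at this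
  rw [rank]
  omega

variable [DecidableEq n]

lemma eigenspace_mulVecLin_one_sub_one (N : Matrix n n K) :
    Module.End.eigenspace (1 - N).mulVecLin 1 = LinearMap.ker N.mulVecLin := by
  ext x
  rw [Module.End.mem_eigenspace_iff, one_smul, LinearMap.mem_ker, mulVecLin_apply,
    mulVecLin_apply, sub_mulVec, one_mulVec, sub_eq_self]

lemma finrank_ker_mulVecLin_mul_mul_of_isUnit {A C : Matrix n n K} (hA : IsUnit A) (hC : IsUnit C)
    (B : Matrix n n K) :
    Module.finrank K (LinearMap.ker (A * B * C).mulVecLin) =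
      Module.finrank K (LinearMap.ker B.mulVecLin) := by
  rw [finrank_ker_mulVecLin_eq_card_sub_rank, finrank_ker_mulVecLin_eq_card_sub_rank,
    rank_mul_eq_left_of_isUnit_det _ _ ((isUnit_iff_isUnit_det C).mp hC),
    rank_mul_eq_right_of_isUnit_det _ _ ((isUnit_iff_isUnit_det A).mp hA)]

end Matrix

namespace SimpleGraph

variable {V : Type} [Fintype V] [DecidableEq V] (G : SimpleGraph V) [DecidableRel G.Adj]

noncomputable def degInvSqrt (v : V) : ℝ := (G.degree v : ℝ) ^ (-(1/2 : ℝ))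

variable {G}

lemma isUnit_diagonal_degInvSqrt (hdeg : ∀ v, 0 < G.degree v) :
    IsUnit (diagonal G.degInvSqrt) :=
  isUnit_diagonal.mpr <| Pi.isUnit_iff.mpr fun v =>
    (Real.rpow_pos_of_pos (Nat.cast_pos.mpr (hdeg v)) _).ne'.isUnit

lemma diagonal_degInvSqrt_mul_degMatrix_mul (hdeg : ∀ v, 0 < G.degree v) :
    diagonal G.degInvSqrt * G.degMatrix ℝ * diagonal G.degInvSqrt = 1 := by
  rw [degMatrix, diagonal_mul_diagonal, diagonal_mul_diagonal, ← diagonal_one]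
  congr 1
  funext v
  have hd : (0 : ℝ) < G.degree v := Nat.cast_pos.mpr (hdeg v)
  rw [degInvSqrt, mul_right_comm, ← Real.rpow_add hd, ← Real.rpow_add_one hd.ne']
  norm_num

lemma normAdj_eq_one_sub (hdeg : ∀ v, 0 < G.degree v) :
    normAdj G = 1 - diagonal G.degInvSqrt * G.lapMatrix ℝ * diagonal G.degInvSqrt := by
  rw [lapMatrix, mul_sub, sub_mul, diagonal_degInvSqrt_mul_degMatrix_mul hdeg, sub_sub_cancel]
  rfl

end SimpleGraph

theorem stmt7 {V : Type} [Fintype V] [DecidableEq V]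
    (G : SimpleGraph V) [DecidableRel G.Adj] (hdeg : ∀ v, 0 < G.degree v) :
    Module.finrank ℝ ↥(Module.End.eigenspace (Matrix.mulVecLin (normAdj G)) 1) =
      Nat.card G.ConnectedComponent := by
  have hS := G.isUnit_diagonal_degInvSqrt hdeg
  rw [G.normAdj_eq_one_sub hdeg, eigenspace_mulVecLin_one_sub_one,
    finrank_ker_mulVecLin_mul_mul_of_isUnit hS hS, Nat.card_eq_fintype_card,
    G.card_connectedComponent_eq_finrank_ker_toLin'_lapMatrix, toLin'_apply']
end

section
/- Let M be a real symmetric matrix indexed by a finite type n with decidable equality such that every real eigenvalue μ of M satisfies -1 < μ ≤ 1. Then there exists a matrix P such that M^k converges entrywise to P as k → ∞, Pᵀ = P, P * P = P, M * P = P, and for every x : n → ℝ one has M *ᵥ x = x if and only if P *ᵥ x = x (i.e. the limit is the orthogonal projection onto the eigenspace of M for eigenvalue 1). -/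
/-!
By the spectral theorem `M ^ k = U D ^ k Uᴴ` with `D` diagonal, and each eigenvalue `μ ∈ (-1, 1]`
has `μ ^ k → 1` if `μ = 1` and `μ ^ k → 0` otherwise, so the powers of `M` converge to some `P`.
Everything else is read off this limit alone: `M * M ^ k = M ^ (k + 1)` gives `M * P = P`,
`M ^ k * M ^ k = M ^ (2 k)` gives `P * P = P`, symmetry passes to the limit, and a fixed vector of
`M` is fixed by every `M ^ k`, hence by `P`; conversely `P x = x` gives `M x = M P x = P x = x`.
-/

open Matrix Filter Topology

section TendstoPow

variable {R : Type*} [Monoid R] [TopologicalSpace R] [T2Space R] {a p : R}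

theorem mul_eq_right_of_tendsto_pow [ContinuousMul R] (h : Tendsto (a ^ ·) atTop (𝓝 p)) :
    a * p = p := by
  have hshift : Tendsto (fun k => a * a ^ k) atTop (𝓝 p) := by
    simpa only [pow_succ'] using (tendsto_add_atTop_iff_nat 1).2 h
  exact tendsto_nhds_unique (h.const_mul a) hshift

theorem isIdempotentElem_of_tendsto_pow [ContinuousMul R] (h : Tendsto (a ^ ·) atTop (𝓝 p)) :
    IsIdempotentElem p := by
  have hdouble : Tendsto (fun k => a ^ k * a ^ k) atTop (𝓝 p) := by
    simpa only [Function.comp_def, pow_add] using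
      h.comp (tendsto_atTop_mono (fun k => Nat.le_add_left k k) tendsto_id)
  exact tendsto_nhds_unique (h.mul h) hdouble

theorem isSelfAdjoint_of_tendsto_pow [StarMul R] [ContinuousStar R] (ha : IsSelfAdjoint a)
    (h : Tendsto (a ^ ·) atTop (𝓝 p)) : IsSelfAdjoint p :=
  (isClosed_eq continuous_star continuous_id).mem_of_tendsto h
    (Eventually.of_forall fun k => ha.pow k)

end TendstoPow

theorem tendsto_pow_atTop_nhds_of_mem_Ioc {r : ℝ} (hr : r ∈ Set.Ioc (-1) 1) :
    Tendsto (r ^ ·) atTop (𝓝 (if r = 1 then 1 else 0)) := by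
  by_cases h : r = 1
  · simp [h]
  · rw [if_neg h]
    exact tendsto_pow_atTop_nhds_zero_of_abs_lt_one (abs_lt.2 ⟨hr.1, hr.2.lt_of_ne h⟩)

namespace Matrix

variable {n : Type*} [Fintype n] [DecidableEq n]

theorem tendsto_pow_diagonal {R : Type*} [CommSemiring R] [TopologicalSpace R] {d p : n → R}
    (h : ∀ i, Tendsto (d i ^ ·) atTop (𝓝 (p i))) :
    Tendsto (diagonal d ^ ·) atTop (𝓝 (diagonal p)) := by
  simp only [diagonal_pow]
  exact (continuous_id.matrix_diagonal.tendsto p).comp (tendsto_pi_nhds.2 h)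

theorem mulVec_eq_self_of_tendsto_pow {R : Type*} [CommSemiring R] [TopologicalSpace R]
    [IsTopologicalSemiring R] [T2Space R] {A P : Matrix n n R} (h : Tendsto (A ^ ·) atTop (𝓝 P))
    {x : n → R} (hx : A *ᵥ x = x) : P *ᵥ x = x := by
  have hpow : ∀ k : ℕ, (A ^ k) *ᵥ x = x := by
    intro k
    induction k with
    | zero => simp
    | succ k ih => rw [pow_succ', ← mulVec_mulVec, ih, hx]
  have hlim : Tendsto (fun k => (A ^ k) *ᵥ x) atTop (𝓝 (P *ᵥ x)) :=
    (continuous_id.matrix_mulVec continuous_const).tendsto P |>.comp h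
  simp only [hpow] at hlim
  exact tendsto_nhds_unique hlim tendsto_const_nhds

theorem IsHermitian.exists_tendsto_pow {𝕜 : Type*} [RCLike 𝕜] {M : Matrix n n 𝕜}
    (hM : M.IsHermitian) (heig : ∀ i, hM.eigenvalues i ∈ Set.Ioc (-1) 1) :
    ∃ P, Tendsto (M ^ ·) atTop (𝓝 P) := by
  set U := hM.eigenvectorUnitary
  set D : Matrix n n 𝕜 := diagonal (RCLike.ofReal ∘ hM.eigenvalues)
  have hpow : ∀ k : ℕ, M ^ k = U * D ^ k * star (U : Matrix n n 𝕜) := fun k => by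
    conv_lhs => rw [hM.spectral_theorem]
    rw [← map_pow, Unitary.conjStarAlgAut_apply]
  have hD : Tendsto (fun k : ℕ => D ^ k) atTop
      (𝓝 (diagonal fun i => ((if hM.eigenvalues i = 1 then 1 else 0 : ℝ) : 𝕜))) :=
    tendsto_pow_diagonal fun i => by
      simpa only [Function.comp_def, RCLike.ofReal_pow] using
        ((RCLike.continuous_ofReal (K := 𝕜)).tendsto _).comp
          (tendsto_pow_atTop_nhds_of_mem_Ioc (heig i))
  simp only [hpow]
  exact ⟨_, (hD.const_mul _).mul_const _⟩

end Matrix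

theorem stmt8 {n : Type} [Fintype n] [DecidableEq n] (M : Matrix n n ℝ)
    (hsymm : Mᵀ = M)
    (heig : ∀ (μ : ℝ) (x : n → ℝ), x ≠ 0 → M *ᵥ x = μ • x → -1 < μ ∧ μ ≤ 1) :
    ∃ P : Matrix n n ℝ,
      (∀ i j, Tendsto (fun k => (M ^ k) i j) atTop (nhds (P i j))) ∧
      Pᵀ = P ∧ P * P = P ∧ M * P = P ∧
      ∀ x : n → ℝ, M *ᵥ x = x ↔ P *ᵥ x = x := by
  have hM : M.IsHermitian := isHermitian_iff_isSymm.2 hsymm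
  have hspec : ∀ i, hM.eigenvalues i ∈ Set.Ioc (-1) 1 := fun i =>
    heig _ _ ((WithLp.ofLp_eq_zero 2).ne.2 (hM.eigenvectorBasis.orthonormal.ne_zero i))
      (hM.mulVec_eigenvectorBasis i)
  obtain ⟨P, hP⟩ := hM.exists_tendsto_pow hspec
  have hMP : M * P = P := mul_eq_right_of_tendsto_pow hP
  refine ⟨P, fun i j => tendsto_pi_nhds.1 (tendsto_pi_nhds.1 hP i) j,
    isHermitian_iff_isSymm.1 (isSelfAdjoint_of_tendsto_pow hM hP),
    isIdempotentElem_of_tendsto_pow hP, hMP, fun x => ⟨mulVec_eq_self_of_tendsto_pow hP, ?_⟩⟩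
  intro hx
  calc M *ᵥ x = M *ᵥ (P *ᵥ x) := by rw [hx]
    _ = x := by rw [mulVec_mulVec, hMP, hx]
end

section
/- Let G be a finite simple graph on a finite vertex type V with decidable adjacency and let n be the cardinality of V. Then the WL coloring stabilizes by iteration n: for every t ≥ n and all vertices u, v one has wl G t u = wl G t v if and only if wl G n u = wl G n v. -/
/-- The type of 1-WL colors at iteration `t`. -/
def WLColor : ℕ → Type
  | 0 => Unit
  | t + 1 => WLColor t × Multiset (WLColor t)

/-- The 1-WL (color refinement) coloring of a graph at iteration `t`. -/
def wl {V : Type} [Fintype V] [DecidableEq V] (G : SimpleGraph V) [DecidableRel G.Adj] :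
    (t : ℕ) → V → WLColor t
  | 0 => fun _ => ()
  | t + 1 => fun v => (wl G t v, (G.neighborFinset v).val.map (wl G t))

/-- The WL signature of `G` at iteration `t`: the multiset of WL colors of all vertices. -/
def wlSig {V : Type} [Fintype V] [DecidableEq V] (G : SimpleGraph V) [DecidableRel G.Adj]
    (t : ℕ) : Multiset (WLColor t) :=
  Finset.univ.val.map (wl G t)

/-!
The colour partition of round `t + 1` refines that of round `t`, and it is determined by the
partition of round `t` alone. Hence each round either splits some colour class or leaves the
partition unchanged, after which it never changes again. A partition of `V` has at most
`card V` classes, so the partition is stable from some round `s ≤ card V` on.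
-/

open Finset Function

theorem Multiset.map_eq_map_of_factorsThrough {α β γ : Type*} {f : α → β} {g : α → γ}
    (hgf : g.FactorsThrough f) {M N : Multiset α} (h : M.map f = N.map f) :
    M.map g = N.map g := by
  -- `f` is the injective `kerLift f` after the quotient map, and `g` descends to that quotient.
  have hker : M.map (Quotient.mk (Setoid.ker f)) = N.map (Quotient.mk _) := by
    refine Multiset.map_injective (Setoid.kerLift_injective f) ?_
    rw [Multiset.map_map, Multiset.map_map]
    exact h
  have hg : g = Quotient.lift g (fun _ _ hab => hgf hab) ∘ Quotient.mk (Setoid.ker f) := rfl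
  rw [hg, ← Multiset.map_map, ← Multiset.map_map, hker]

theorem Function.FactorsThrough.trans {α β γ δ : Type*} {e : α → δ} {f : α → β} {g : α → γ}
    (hgf : g.FactorsThrough f) (hfe : f.FactorsThrough e) : g.FactorsThrough e :=
  fun _ _ h => hgf (hfe h)

theorem Function.factorsThrough_comp_of_card_image_le {α β γ : Type*} [Fintype α]
    [DecidableEq β] [DecidableEq γ] (g : α → γ) (k : γ → β)
    (h : #(univ.image g) ≤ #(univ.image (k ∘ g))) : g.FactorsThrough (k ∘ g) := by
  intro a b hab
  have hinj : Set.InjOn k (univ.image g) := by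
    refine Finset.injOn_of_card_image_eq (le_antisymm card_image_le ?_)
    rwa [image_image]
  exact hinj (mem_image_of_mem g (mem_univ a)) (mem_image_of_mem g (mem_univ b)) hab

theorem Nat.exists_apply_succ_le_of_apply_succ_le {f : ℕ → ℕ} {n : ℕ} (hf : f (n + 1) ≤ n) :
    ∃ s ≤ n, f (s + 1) ≤ f s := by
  by_contra! hlt
  have hgrowth : ∀ k ≤ n + 1, k ≤ f k := by
    intro k hk
    induction k with
    | zero => exact Nat.zero_le _
    | succ k ih =>
      have hk' : k ≤ f k := ih (by omega)
      have hstep : f k < f (k + 1) := hlt k (by omega)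
      omega
  have := hgrowth (n + 1) le_rfl
  omega

section WL

variable {V : Type} [Fintype V] [DecidableEq V] (G : SimpleGraph V) [DecidableRel G.Adj]

theorem wl_eq_fst_comp_wl_succ (t : ℕ) :
    wl G t = Prod.fst (α := WLColor t) (β := Multiset (WLColor t)) ∘ wl G (t + 1) :=
  rfl

theorem wl_factorsThrough_wl_succ (t : ℕ) : (wl G t).FactorsThrough (wl G (t + 1)) :=
  fun _ _ h => congrArg Prod.fst h

theorem wl_factorsThrough_of_le {t s : ℕ} (hts : t ≤ s) : (wl G t).FactorsThrough (wl G s) := by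
  induction s, hts using Nat.le_induction with
  | base => exact fun _ _ => id
  | succ s _ ih => exact ih.trans (wl_factorsThrough_wl_succ G s)

theorem wl_succ_factorsThrough_wl_succ {t s : ℕ} (h : (wl G s).FactorsThrough (wl G t)) :
    (wl G (s + 1)).FactorsThrough (wl G (t + 1)) := by
  intro u v huv
  obtain ⟨hself, hnbrs⟩ := Prod.ext_iff.1 huv
  exact Prod.ext (h hself) (Multiset.map_eq_map_of_factorsThrough h hnbrs)

theorem wl_factorsThrough_of_stable {t : ℕ} (hstable : (wl G (t + 1)).FactorsThrough (wl G t))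
    {s : ℕ} (hts : t ≤ s) : (wl G s).FactorsThrough (wl G t) := by
  induction s, hts using Nat.le_induction with
  | base => exact fun _ _ => id
  | succ s _ ih => exact (wl_succ_factorsThrough_wl_succ G ih).trans hstable

theorem exists_wl_stable :
    ∃ s ≤ Fintype.card V, (wl G (s + 1)).FactorsThrough (wl G s) := by
  classical
  obtain ⟨s, hs, hcard⟩ := Nat.exists_apply_succ_le_of_apply_succ_le
    (f := fun t => #(univ.image (wl G t))) (n := Fintype.card V)
    (card_image_le.trans_eq card_univ)
  refine ⟨s, hs, ?_⟩
  rw [wl_eq_fst_comp_wl_succ G s] at hcard ⊢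
  exact factorsThrough_comp_of_card_image_le _ _ hcard

end WL

theorem stmt14 {V : Type} [Fintype V] [DecidableEq V]
    (G : SimpleGraph V) [DecidableRel G.Adj] :
    ∀ t, Fintype.card V ≤ t → ∀ u v : V,
      wl G t u = wl G t v ↔ wl G (Fintype.card V) u = wl G (Fintype.card V) v := by
  intro t ht u v
  obtain ⟨s, hs, hstable⟩ := exists_wl_stable G
  exact ⟨fun h => wl_factorsThrough_of_le G ht h,
    fun h => wl_factorsThrough_of_stable G hstable (hs.trans ht) (wl_factorsThrough_of_le G hs h)⟩
end

section
/- Let G₁ and G₂ be finite simple graphs on finite vertex types V₁ and V₂ (each with decidable adjacency). Then for every message-passing scheme (X, x₀, f), every iteration t, and all vertices u of G₁ and v of G₂: if wl G₁ t u = wl G₂ t v, then feat G₁ t u = feat G₂ t v. That is, the feature computed by any message-passing scheme at layer t is determined by the 1-WL color at iteration t. -/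
/-- A message-passing scheme: a family of feature types, an initial feature, and
update functions combining a node feature with the multiset of its neighbors features. -/
structure MPScheme where
  X : ℕ → Type
  x₀ : X 0
  f : (t : ℕ) → X t → Multiset (X t) → X (t + 1)

/-- The features computed by a message-passing scheme on a graph. -/
def MPScheme.feat (S : MPScheme) {V : Type} [Fintype V] [DecidableEq V]
    (G : SimpleGraph V) [DecidableRel G.Adj] : (t : ℕ) → V → S.X t
  | 0 => fun _ => S.x₀
  | t + 1 => fun v => S.f t (S.feat G t v) ((G.neighborFinset v).val.map (S.feat G t))

/-! A WL color at iteration `t + 1` records exactly the data a message-passing layer reads (the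
vertex's own color and the multiset of its neighbours' colors), so every scheme can be run on
WL colors themselves. The feature of a vertex is then a fixed function of its WL color,
independently of the graph. -/

namespace MPScheme

def decode (S : MPScheme) : (t : ℕ) → WLColor t → S.X t
  | 0 => fun _ => S.x₀
  | t + 1 => fun c => S.f t (S.decode t c.1) (c.2.map (S.decode t))

theorem feat_eq_decode_wl (S : MPScheme) {V : Type} [Fintype V] [DecidableEq V]
    (G : SimpleGraph V) [DecidableRel G.Adj] (t : ℕ) : S.feat G t = S.decode t ∘ wl G t := by
  induction t with
  | zero => rfl
  | succ t ih =>
    funext v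
    change S.f t (S.feat G t v) ((G.neighborFinset v).val.map (S.feat G t)) =
      S.f t (S.decode t (wl G t v)) (((G.neighborFinset v).val.map (wl G t)).map (S.decode t))
    rw [ih, Multiset.map_map, Function.comp_apply]

end MPScheme

theorem stmt16 {V₁ V₂ : Type} [Fintype V₁] [DecidableEq V₁] [Fintype V₂] [DecidableEq V₂]
    (G₁ : SimpleGraph V₁) [DecidableRel G₁.Adj] (G₂ : SimpleGraph V₂) [DecidableRel G₂.Adj]
    (S : MPScheme) (t : ℕ) (u : V₁) (v : V₂)
    (h : wl G₁ t u = wl G₂ t v) :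
    S.feat G₁ t u = S.feat G₂ t v := by
  rw [S.feat_eq_decode_wl G₁, S.feat_eq_decode_wl G₂, Function.comp_apply, Function.comp_apply, h]
end

section
/- Let G₁ and G₂ be finite simple graphs on finite vertex types V₁ and V₂ (each with decidable adjacency), and let t be an iteration such that the WL signatures of G₁ and G₂ at iteration t are equal. Then for every message-passing scheme (X, x₀, f), the multiset of feat G₁ t v over all vertices v of G₁ equals the multiset of feat G₂ t v over all vertices v of G₂. -/
/-! Every message-passing feature is a function of the WL color of the same vertex: a WL color at
iteration `t` records the whole unfolding of the neighbourhood up to depth `t`, and running the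
scheme on that unfolding (`MPScheme.ofColor`) reproduces the feature. Hence the multiset of features
is the image of the WL signature under one fixed map, and equal signatures give equal images. -/

namespace MPScheme

def ofColor (S : MPScheme) : (t : ℕ) → WLColor t → S.X t
  | 0 => fun _ => S.x₀
  | t + 1 => fun c => S.f t (S.ofColor t c.1) (c.2.map (S.ofColor t))

theorem feat_eq_ofColor_wl (S : MPScheme) {V : Type} [Fintype V] [DecidableEq V]
    (G : SimpleGraph V) [DecidableRel G.Adj] : ∀ t, S.feat G t = S.ofColor t ∘ wl G t
  | 0 => rfl
  | t + 1 => funext fun v => by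
    show S.f t (S.feat G t v) ((G.neighborFinset v).val.map (S.feat G t)) =
      S.f t (S.ofColor t (wl G t v)) (((G.neighborFinset v).val.map (wl G t)).map (S.ofColor t))
    rw [Multiset.map_map, feat_eq_ofColor_wl S G t, Function.comp_apply]

theorem map_feat_univ_eq_map_wlSig (S : MPScheme) {V : Type} [Fintype V] [DecidableEq V]
    (G : SimpleGraph V) [DecidableRel G.Adj] (t : ℕ) :
    Finset.univ.val.map (S.feat G t) = (wlSig G t).map (S.ofColor t) := by
  rw [wlSig, Multiset.map_map, feat_eq_ofColor_wl]

end MPScheme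

theorem stmt17 {V₁ V₂ : Type} [Fintype V₁] [DecidableEq V₁] [Fintype V₂] [DecidableEq V₂]
    (G₁ : SimpleGraph V₁) [DecidableRel G₁.Adj] (G₂ : SimpleGraph V₂) [DecidableRel G₂.Adj]
    (t : ℕ) (h : wlSig G₁ t = wlSig G₂ t) (S : MPScheme) :
    Finset.univ.val.map (S.feat G₁ t) = Finset.univ.val.map (S.feat G₂ t) := by
  rw [S.map_feat_univ_eq_map_wlSig, S.map_feat_univ_eq_map_wlSig, h]
end

section
/- Let G₁ and G₂ be finite simple graphs on finite vertex types V₁ and V₂ (each with decidable adjacency), and let k be a natural number such that the WL signatures of G₁ and G₂ are equal at every iteration l < k and differ at iteration k (i.e. the 1-WL test first distinguishes G₁ and G₂ at the k-th iteration). Then: (i) for every l < k, every message-passing scheme (X, x₀, f), and every readout function R : Multiset (X l) → Y, applying R to the multiset of layer-l features of G₁ yields the same value as applying R to the multiset of layer-l features of G₂; and (ii) for every L ≥ k there exist a message-passing scheme (X, x₀, f) and a readout function R : Multiset (X L) → Y such that R applied to the multiset of layer-L features of G₁ differs from R applied to the multiset of layer-L features of G₂. -/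
/-!
Every message-passing feature is a function of the WL color: by induction on the layer,
`feat G t v = S.colorFeat t (wl G t v)`, so the layer-`l` feature multiset is the image of
the WL signature, and equal signatures give equal readouts. Conversely the scheme whose update
is `(c, m) ↦ (c, m)` computes exactly the WL colors; since each signature is the image of the
next one under the first projection, a difference at iteration `k` persists at every `L ≥ k`, and the
identity readout separates the graphs.
-/

namespace MPScheme

def colorFeat (S : MPScheme) : (t : ℕ) → WLColor t → S.X t
  | 0, _ => S.x₀
  | t + 1, c => S.f t (S.colorFeat t c.1) (c.2.map (S.colorFeat t))

def wlScheme : MPScheme where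
  X := WLColor
  x₀ := ()
  f _ c m := (c, m)

variable {V : Type} [Fintype V] [DecidableEq V] (G : SimpleGraph V) [DecidableRel G.Adj]

theorem feat_eq_colorFeat_wl (S : MPScheme) (t : ℕ) :
    S.feat G t = S.colorFeat t ∘ wl G t := by
  induction t with
  | zero => rfl
  | succ t ih =>
    funext v
    show S.f t (S.feat G t v) ((G.neighborFinset v).val.map (S.feat G t)) =
      S.f t (S.colorFeat t (wl G t v)) (((G.neighborFinset v).val.map (wl G t)).map (S.colorFeat t))
    rw [Multiset.map_map, ih]
    rfl

theorem map_feat_eq_map_wlSig (S : MPScheme) (t : ℕ) :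
    Finset.univ.val.map (S.feat G t) = (wlSig G t).map (S.colorFeat t) := by
  rw [wlSig, Multiset.map_map, feat_eq_colorFeat_wl]

theorem wlScheme_feat (t : ℕ) : wlScheme.feat G t = wl G t := by
  induction t with
  | zero => rfl
  | succ t ih =>
    funext v
    simp only [feat, wl, ih]
    rfl

end MPScheme

theorem wlSig_map_fst {V : Type} [Fintype V] [DecidableEq V]
    (G : SimpleGraph V) [DecidableRel G.Adj] (t : ℕ) :
    (wlSig G (t + 1)).map (fun c : WLColor (t + 1) => c.1) = wlSig G t := by
  simp only [wlSig, Multiset.map_map]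
  rfl

theorem wlSig_eq_of_le {V₁ V₂ : Type} [Fintype V₁] [DecidableEq V₁] [Fintype V₂] [DecidableEq V₂]
    (G₁ : SimpleGraph V₁) [DecidableRel G₁.Adj] (G₂ : SimpleGraph V₂) [DecidableRel G₂.Adj]
    {k L : ℕ} (hkL : k ≤ L) (h : wlSig G₁ L = wlSig G₂ L) : wlSig G₁ k = wlSig G₂ k := by
  induction L, hkL using Nat.le_induction with
  | base => exact h
  | succ L _ ih => exact ih (by rw [← wlSig_map_fst G₁ L, ← wlSig_map_fst G₂ L, h])

theorem stmt18 {V₁ V₂ : Type} [Fintype V₁] [DecidableEq V₁] [Fintype V₂] [DecidableEq V₂]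
    (G₁ : SimpleGraph V₁) [DecidableRel G₁.Adj] (G₂ : SimpleGraph V₂) [DecidableRel G₂.Adj]
    (k : ℕ)
    (hlt : ∀ l < k, wlSig G₁ l = wlSig G₂ l)
    (hk : wlSig G₁ k ≠ wlSig G₂ k) :
    (∀ l < k, ∀ (S : MPScheme) (Y : Type) (R : Multiset (S.X l) → Y),
      R (Finset.univ.val.map (S.feat G₁ l)) = R (Finset.univ.val.map (S.feat G₂ l))) ∧
    (∀ L, k ≤ L → ∃ (S : MPScheme) (Y : Type) (R : Multiset (S.X L) → Y),
      R (Finset.univ.val.map (S.feat G₁ L)) ≠ R (Finset.univ.val.map (S.feat G₂ L))) := by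
  refine ⟨fun l hl S Y R => ?_, fun L hL => ⟨MPScheme.wlScheme, _, id, ?_⟩⟩
  · rw [MPScheme.map_feat_eq_map_wlSig, MPScheme.map_feat_eq_map_wlSig, hlt l hl]
  · rw [id, id, MPScheme.wlScheme_feat, MPScheme.wlScheme_feat]
    exact fun h => hk (wlSig_eq_of_le G₁ G₂ hL h)
end
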